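/- Let α and β be two tilings of a simply connected region R by tiles of T having the same height function h. Then for every tile t₁ of α and every tile t₂ of β, each connected component u of t₁ ∩ t₂ satisfies φ(u) = 0. -/

import Mathlib

/-- A square of the grid, indexed by its `(x, y)` coordinates. -/
abbrev Square : Type := ℤ × ℤ

/-- Two squares are adjacent if they share an edge. -/
def SqAdj (s t : Square) : Prop :=
  (s.1 = t.1 ∧ (s.2 = t.2 + 1 ∨ s.2 + 1 = t.2)) ∨
  (s.2 = t.2 ∧ (s.1 = t.1 + 1 ∨ s.1 + 1 = t.1))

/-- A set of squares is connected with respect to edge-adjacency. -/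
def ConnOn (S : Set Square) : Prop :=
  ∀ a ∈ S, ∀ b ∈ S, Relation.ReflTransGen (fun x y => x ∈ S ∧ y ∈ S ∧ SqAdj x y) a b

/-- Winding number of a sequence of squares around the square `p`: the signed
number of crossings of the upward vertical ray above (the center of) `p`;
a leftward horizontal move strictly above `p` counts `+1`, so that a
counterclockwise loop around `p` has winding number `+1`. -/
def sqWinding (p : Square) (L : List Square) : ℤ :=
  ((L.zip L.tail).map (fun ab : Square × Square =>
    if ab.1.2 = ab.2.2 ∧ p.2 < ab.1.2 ∧ ab.1.1 = p.1 + 1 ∧ ab.2.1 = p.1 then (1 : ℤ)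
    else if ab.1.2 = ab.2.2 ∧ p.2 < ab.1.2 ∧ ab.1.1 = p.1 ∧ ab.2.1 = p.1 + 1 then (-1 : ℤ)
    else 0)).sum

/-- A closed cycle of squares all lying in `S`. -/
def SqLoopIn (S : Set Square) (L : List Square) : Prop :=
  L ≠ [] ∧ (∀ s ∈ L, s ∈ S) ∧ L.Chain' SqAdj ∧ L.head? = L.getLast?

/-- A set of squares is simply connected if no cycle of squares in it encircles
a square outside of it with nonzero winding number. -/
def SimplyConnectedSq (S : Set Square) : Prop :=
  ∀ p : Square, p ∉ S → ∀ L : List Square, SqLoopIn S L → sqWinding p L = 0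

/-- A region: a finite, nonempty, connected set of squares. -/
def IsRegion (R : Finset Square) : Prop := R.Nonempty ∧ ConnOn ↑R

/-- A ribbon tile of order `n`: a connected set of `n` squares containing
exactly one square of each color `c`, where the square `(x, y)` has color
`(x + y) mod n`. -/
def IsRibbonTile (n : ℕ) (t : Finset Square) : Prop :=
  ConnOn ↑t ∧ t.card = n ∧
  ∀ c : ℤ, 0 ≤ c → c < n → ∃! s, s ∈ t ∧ (s.1 + s.2) % n = c

/-- An order-`n` ribbon tiling of `R`: a partition of `R` into order-`n`
ribbon tiles. -/
def IsRibbonTiling (n : ℕ) (R : Finset Square) (α : Finset (Finset Square)) : Prop :=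
  (∀ t ∈ α, IsRibbonTile n t) ∧ (∀ t ∈ α, t ⊆ R) ∧
  (∀ s ∈ R, ∃! t, t ∈ α ∧ s ∈ t)

/-- Two tilings differ by a local replacement move: one is obtained from the
other by removing a single pair of tiles and adding a different pair of tiles
covering the same squares. -/
def LocalMove (α β : Finset (Finset Square)) : Prop :=
  ∃ t₁ t₂ u₁ u₂ : Finset Square, t₁ ∈ α ∧ t₂ ∈ α ∧ t₁ ≠ t₂ ∧ u₁ ≠ u₂ ∧
    ({t₁, t₂} : Finset (Finset Square)) ≠ {u₁, u₂} ∧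
    t₁ ∪ t₂ = u₁ ∪ u₂ ∧
    β = (α \ {t₁, t₂}) ∪ {u₁, u₂}

/-- The "left of" relation on squares: `s` is directly left (same level,
smaller `x`) or indirectly left (levels differing by one, `x ≤ x'`, `y ≥ y'`)
of `s'`. -/
def sqPrec (s t : Square) : Prop :=
  (s.1 + s.2 = t.1 + t.2 ∧ s.1 < t.1) ∨
  (|s.1 + s.2 - (t.1 + t.2)| = 1 ∧ s.1 ≤ t.1 ∧ t.2 ≤ s.2)

/-- The "left of" relation for (sets of) squares: `t₁ ≺ t₂` if some square of
`t₁` is left of some square of `t₂`.  A single square `s` is treated as the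
singleton `{s}`. -/
def TilePrec (t₁ t₂ : Finset Square) : Prop :=
  ∃ s₁ ∈ t₁, ∃ s₂ ∈ t₂, sqPrec s₁ s₂

/-- The boundary `B_R` of a region: squares not in `R` adjacent to a square
of `R`. -/
def boundarySet (R : Finset Square) : Set Square :=
  {s | s ∉ R ∧ ∃ r ∈ R, SqAdj s r}

/-- The level of a tile: the level `x + y` of its lowest square. -/
def tileLevel (t : Finset Square) : ℤ := WithTop.untopD 0 ((t.image fun s : Square => s.1 + s.2).min)

/-- `IsNthTile α c i t`: `t` is the tile `t_{c,i}(α)`, i.e. the `i`-th tile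
(0-indexed, from left to right with respect to `≺`) of level `c` in the
tiling `α`. -/
def IsNthTile (α : Finset (Finset Square)) (c : ℤ) (i : ℕ) (t : Finset Square) : Prop :=
  t ∈ α ∧ tileLevel t = c ∧
  {t' : Finset Square | t' ∈ α ∧ t' ≠ t ∧ tileLevel t' = c ∧ TilePrec t' t}.ncard = i



/-- A lattice vertex (a corner of grid squares). -/
abbrev LVert : Type := ℤ × ℤ

/-- Two lattice vertices joined by a unit edge. -/
def VAdj (a b : LVert) : Prop :=
  (a.1 = b.1 ∧ (a.2 = b.2 + 1 ∨ a.2 + 1 = b.2)) ∨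
  (a.2 = b.2 ∧ (a.1 = b.1 + 1 ∨ a.1 + 1 = b.1))

/-- The (at most) two squares flanking the lattice edge with endpoints
`a`, `b` (for a unit edge). The square `(x, y)` has corners `(x, y)`,
`(x+1, y)`, `(x, y+1)`, `(x+1, y+1)`. -/
def edgeSquares (a b : LVert) : Set Square :=
  if a.1 = b.1 then {(a.1 - 1, min a.2 b.2), (a.1, min a.2 b.2)}
  else {(min a.1 b.1, a.2 - 1), (min a.1 b.1, a.2)}

/-- `v` is a corner of the square `s`. -/
def IsCornerOf (v : LVert) (s : Square) : Prop :=
  (v.1 = s.1 ∨ v.1 = s.1 + 1) ∧ (v.2 = s.2 ∨ v.2 = s.2 + 1)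

/-- `v` is a vertex of the region `R`. -/
def VertexOfR (R : Finset Square) (v : LVert) : Prop :=
  ∃ s ∈ R, IsCornerOf v s

/-- `v` is a vertex on the boundary of the region `R`. -/
def BoundaryVertexR (R : Finset Square) (v : LVert) : Prop :=
  (∃ s ∈ R, IsCornerOf v s) ∧ (∃ s : Square, s ∉ R ∧ IsCornerOf v s)

/-- The sum of `φ` over the four clockwise-oriented edges of the square `s`
(with the `x`-axis pointing right and the `y`-axis pointing up). -/
def phiSq {G : Type*} [AddCommGroup G] (φ : LVert → LVert → G) (s : Square) : G :=
  φ (s.1, s.2) (s.1, s.2 + 1) + φ (s.1, s.2 + 1) (s.1 + 1, s.2 + 1) +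
    φ (s.1 + 1, s.2 + 1) (s.1 + 1, s.2) + φ (s.1 + 1, s.2) (s.1, s.2)

/-- The edge `(a, b)` is an interior edge of the tile `t`: both flanking
squares belong to `t`. -/
def InteriorEdgeOf (t : Finset Square) (a b : LVert) : Prop :=
  VAdj a b ∧ ∀ s ∈ edgeSquares a b, s ∈ t

/-- The edge `(a, b)` is a boundary edge of the tile `t`. -/
def BoundaryEdgeOf (t : Finset Square) (a b : LVert) : Prop :=
  VAdj a b ∧ (∃ s ∈ edgeSquares a b, s ∈ t) ∧ (∃ s ∈ edgeSquares a b, s ∉ t)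

/-- `v` lies on the boundary of the tile `t`. -/
def OnBoundaryOf (t : Finset Square) (v : LVert) : Prop :=
  ∃ w : LVert, BoundaryEdgeOf t v w

/-- The edge `(a, b)` crosses a tile of the tiling `α` (it lies between two
squares of one tile). -/
def CrossesTile (α : Finset (Finset Square)) (a b : LVert) : Prop :=
  ∃ t ∈ α, InteriorEdgeOf t a b

/-- A tiling of the region `R` by tiles from the tile set `T`. -/
def IsTilingBy (T : Set (Finset Square)) (R : Finset Square)
    (α : Finset (Finset Square)) : Prop :=
  (∀ t ∈ α, t ∈ T) ∧ (∀ t ∈ α, t ⊆ R) ∧ (∀ s ∈ R, ∃! t, t ∈ α ∧ s ∈ t)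

/-- Winding number of a closed sequence of lattice vertices around (the
center of) the square `s`: the signed number of crossings of the upward
vertical ray above `s`; a leftward step strictly above `s` counts `+1`, so a
counterclockwise loop around `s` has winding number `+1`. -/
def vWinding (s : Square) (L : List LVert) : ℤ :=
  ((L.zip L.tail).map (fun ab : LVert × LVert =>
    if ab.1.2 = ab.2.2 ∧ s.2 + 1 ≤ ab.1.2 ∧ ab.1.1 = s.1 + 1 ∧ ab.2.1 = s.1 then (1 : ℤ)
    else if ab.1.2 = ab.2.2 ∧ s.2 + 1 ≤ ab.1.2 ∧ ab.1.1 = s.1 ∧ ab.2.1 = s.1 + 1 then (-1 : ℤ)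
    else 0)).sum

/-- The path `seg` (a maximal list of vertices of the original path lying
inside one tile `t` of `α`) passes the square `s` on the left: its endpoints
`vi`, `vj` lie on the boundary of `t`, all its edges are interior edges of
`t`, and `s` lies inside the closed polygon formed by `seg` together with the
counterclockwise half `q` of the boundary of `t` connecting `vi` to `vj`
(`q'` being the complementary half, so that `q` followed by `q'` is the full
boundary cycle of `t`, traversed counterclockwise). -/
def PassesLeftSeg (α : Finset (Finset Square)) (seg : List LVert) (s : Square) : Prop :=
  ∃ t ∈ α, ∃ vi vj : LVert,
    seg.head? = some vi ∧ seg.getLast? = some vj ∧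
    OnBoundaryOf t vi ∧ OnBoundaryOf t vj ∧
    seg.Chain' (InteriorEdgeOf t) ∧
    ∃ q q' : List LVert,
      q.head? = some vi ∧ q.getLast? = some vj ∧
      q'.head? = some vj ∧ q'.getLast? = some vi ∧
      q.Chain' (BoundaryEdgeOf t) ∧ q'.Chain' (BoundaryEdgeOf t) ∧
      (∀ s' ∈ t, vWinding s' (q ++ q'.tail) = 1) ∧
      vWinding s (seg ++ q.reverse.tail) ≠ 0

/-- The sublist of the indexed path `p` from index `i` to index `j`. -/
def segList (p : ℕ → LVert) (i j : ℕ) : List LVert :=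
  (List.range (j - i + 1)).map fun r => p (i + r)



/-- `E` is (the edge relation of) a spanning tree of the squares of `t`:
a symmetric subrelation of adjacency on `t`, connecting all of `t`, with no
simple cycle. -/
def IsSpanningTree (t : Finset Square) (E : Square → Square → Prop) : Prop :=
  (∀ a b, E a b → a ∈ t ∧ b ∈ t ∧ SqAdj a b) ∧
  (∀ a b, E a b → E b a) ∧
  (∀ a ∈ t, ∀ b ∈ t, Relation.ReflTransGen E a b) ∧
  (∀ (k : ℕ) (f : ℕ → Square), 2 < k → (∀ m < k, E (f m) (f (m + 1))) →
    f k = f 0 → ¬ (∀ m < k, ∀ m' < k, f m = f m' → m = m'))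

/-- The edge `(a, b)` lies between two squares of a tile of `α` that are
adjacent in that tile's spanning tree; across such edges the height function
is unconstrained. -/
def TreeCross (α : Finset (Finset Square)) (Etree : Finset Square → Square → Square → Prop)
    (a b : LVert) : Prop :=
  ∃ t ∈ α, ∃ s ∈ edgeSquares a b, ∃ s' ∈ edgeSquares a b,
    s ≠ s' ∧ s ∈ t ∧ s' ∈ t ∧ Etree t s s'

/-- `h` is the height function of the tiling `α` of `R` (with the given
spanning trees), with respect to `φ` and the reference vertex `v₀`:
`h v₀ = 0` and `h` changes by `φ` along every edge of `R` whose two incident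
squares lie in different tiles or are non-adjacent in their tile's spanning
tree. -/
def IsHeightFunction {G : Type*} [AddCommGroup G] (φ : LVert → LVert → G)
    (R : Finset Square) (α : Finset (Finset Square))
    (Etree : Finset Square → Square → Square → Prop)
    (v₀ : LVert) (h : LVert → G) : Prop :=
  h v₀ = 0 ∧
  ∀ a b : LVert, VAdj a b → VertexOfR R a → VertexOfR R b →
    ¬ TreeCross α Etree a b → h b - h a = φ a b

/-! Along a boundary edge of `u` one flanking square lies in `u` and the other lies outside `t₁`
or outside `t₂`, so the edge separates two tiles of `α` or of `β` and `h` follows `φ` there.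
Hence `ψ = φ - dh` vanishes on the boundary of `u`. Summing `ψ` around the squares of `u`,
interior edges cancel by antisymmetry, so `φ(u) = ψ(u) = 0`. -/

theorem Finset.sum_add_right_eq_sum_of_xor {α M : Type*} [AddGroup α] [DecidableEq α]
    [AddCommMonoid M] (u : Finset α) (d : α) (f : α → M)
    (hf : ∀ s, Xor (s - d ∈ u) (s ∈ u) → f s = 0) :
    ∑ s ∈ u, f (s + d) = ∑ s ∈ u, f s := by
  have hmem : ∀ s, s ∈ u.map (addRightEmbedding d) ↔ s - d ∈ u := fun s => by
    simp only [Finset.mem_map, addRightEmbedding_apply]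
    exact ⟨fun ⟨a, ha, hs⟩ => by rwa [← hs, add_sub_cancel_right],
      fun hs => ⟨s - d, hs, sub_add_cancel s d⟩⟩
  calc ∑ s ∈ u, f (s + d)
      = ∑ s ∈ u.map (addRightEmbedding d), f s := by rw [Finset.sum_map]; rfl
    _ = ∑ s ∈ u ∩ u.map (addRightEmbedding d), f s := by
      refine (Finset.sum_subset Finset.inter_subset_right fun s hs hs' => hf s ?_).symm
      rw [Finset.mem_inter, not_and] at hs'
      exact Or.inl ⟨(hmem s).1 hs, fun hsu => hs' hsu hs⟩
    _ = ∑ s ∈ u, f s := by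
      refine Finset.sum_subset Finset.inter_subset_left fun s hs hs' => hf s ?_
      rw [Finset.mem_inter, not_and, hmem] at hs'
      exact Or.inr ⟨hs, hs' hs⟩

section EdgeSquares

lemma edgeSquares_eq_pair (a b : LVert) : ∃ p q, edgeSquares a b = {p, q} := by
  unfold edgeSquares
  split_ifs <;> exact ⟨_, _, rfl⟩

lemma edgeSquares_left (x y : ℤ) : edgeSquares (x, y) (x, y + 1) = {(x - 1, y), (x, y)} := by
  simp [edgeSquares]

lemma edgeSquares_bottom (x y : ℤ) : edgeSquares (x + 1, y) (x, y) = {(x, y - 1), (x, y)} := by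
  simp [edgeSquares]

variable {a b : LVert} {p q : Square}

lemma isCornerOf_of_mem_edgeSquares (hab : VAdj a b) (hp : p ∈ edgeSquares a b) :
    IsCornerOf a p ∧ IsCornerOf b p := by
  unfold VAdj at hab
  unfold edgeSquares at hp
  split_ifs at hp <;>
  · simp only [Set.mem_insert_iff, Set.mem_singleton_iff, Prod.ext_iff] at hp
    unfold IsCornerOf
    omega

lemma sqAdj_of_mem_edgeSquares (hp : p ∈ edgeSquares a b) (hq : q ∈ edgeSquares a b)
    (hpq : p ≠ q) : SqAdj p q := by
  rw [Ne, Prod.ext_iff] at hpq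
  unfold edgeSquares at hp hq
  split_ifs at hp hq <;>
  · simp only [Set.mem_insert_iff, Set.mem_singleton_iff, Prod.ext_iff] at hp hq
    unfold SqAdj
    omega

lemma boundaryEdgeOf_of_xor {u : Finset Square} (hab : VAdj a b)
    (hpq : edgeSquares a b = {p, q}) (hx : Xor (p ∈ u) (q ∈ u)) : BoundaryEdgeOf u a b := by
  refine ⟨hab, ?_, ?_⟩ <;> rw [hpq] <;> rcases hx with ⟨hp, hq⟩ | ⟨hq, hp⟩
  exacts [⟨p, by simp, hp⟩, ⟨q, by simp, hq⟩, ⟨q, by simp, hq⟩, ⟨p, by simp, hp⟩]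

end EdgeSquares

section Stokes

variable {G : Type*} [AddCommGroup G]

lemma phiSq_sub_coboundary (φ : LVert → LVert → G) (h : LVert → G) (s : Square) :
    phiSq (fun a b => φ a b - (h b - h a)) s = phiSq φ s := by
  simp only [phiSq]
  abel

/-- Discrete Stokes: interior edges of `u` cancel in pairs by antisymmetry. -/
theorem sum_phiSq_eq_zero_of_boundaryEdgeOf (ψ : LVert → LVert → G)
    (hanti : ∀ a b, ψ a b = -ψ b a) (u : Finset Square)
    (hbd : ∀ a b, BoundaryEdgeOf u a b → ψ a b = 0) : ∑ s ∈ u, phiSq ψ s = 0 := by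
  set V : Square → G := fun s => ψ (s.1, s.2) (s.1, s.2 + 1)
  set H : Square → G := fun s => ψ (s.1 + 1, s.2) (s.1, s.2)
  have hsq : ∀ s, phiSq ψ s = (V s - V (s + (1, 0))) + (H s - H (s + (0, 1))) := by
    rintro ⟨x, y⟩
    simp only [phiSq, V, H, Prod.mk_add_mk, add_zero, hanti (x, y + 1) (x + 1, y + 1),
      hanti (x + 1, y + 1) (x + 1, y)]
    abel
  have hV : ∀ s, Xor (s - (1, 0) ∈ u) (s ∈ u) → V s = 0 := by
    rintro ⟨x, y⟩ hx
    refine hbd _ _ (boundaryEdgeOf_of_xor (by simp [VAdj]) (edgeSquares_left x y) ?_)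
    simpa using hx
  have hH : ∀ s, Xor (s - (0, 1) ∈ u) (s ∈ u) → H s = 0 := by
    rintro ⟨x, y⟩ hx
    refine hbd _ _ (boundaryEdgeOf_of_xor (by simp [VAdj]) (edgeSquares_bottom x y) ?_)
    simpa using hx
  rw [Finset.sum_congr rfl fun s _ => hsq s, Finset.sum_add_distrib, Finset.sum_sub_distrib,
    Finset.sum_sub_distrib, u.sum_add_right_eq_sum_of_xor _ V hV,
    u.sum_add_right_eq_sum_of_xor _ H hH, sub_self, sub_self, add_zero]

end Stokes

section HeightFunction

variable {T : Set (Finset Square)} {R : Finset Square} {α : Finset (Finset Square)}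

lemma IsTilingBy.eq_of_mem {t t' : Finset Square} {s : Square} (hα : IsTilingBy T R α)
    (ht : t ∈ α) (ht' : t' ∈ α) (hs : s ∈ t) (hs' : s ∈ t') : t = t' :=
  (hα.2.2 s (hα.2.1 t ht hs)).unique ⟨ht, hs⟩ ⟨ht', hs'⟩

lemma TreeCross.exists_tile {E : Finset Square → Square → Square → Prop} {a b : LVert}
    (hc : TreeCross α E a b) : ∃ t ∈ α, ∀ p ∈ edgeSquares a b, p ∈ t := by
  obtain ⟨t, ht, s, hs, s', hs', hss', hst, hs't, -⟩ := hc
  obtain ⟨c, d, hcd⟩ := edgeSquares_eq_pair a b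
  refine ⟨t, ht, fun p hp => ?_⟩
  rw [hcd, Set.mem_insert_iff, Set.mem_singleton_iff] at hp hs hs'
  rcases hp with rfl | rfl <;> rcases hs with rfl | rfl <;> rcases hs' with rfl | rfl <;>
    first | assumption | exact absurd rfl hss'

lemma IsHeightFunction.sub_eq_of_separates {G : Type*} [AddCommGroup G]
    {φ : LVert → LVert → G} {E : Finset Square → Square → Square → Prop} {v₀ : LVert}
    {h : LVert → G} {t : Finset Square} {a b : LVert} {p q : Square}
    (hh : IsHeightFunction φ R α E v₀ h) (hα : IsTilingBy T R α) (ht : t ∈ α) (hab : VAdj a b)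
    (hp : p ∈ edgeSquares a b) (hq : q ∈ edgeSquares a b) (hpt : p ∈ t) (hqt : q ∉ t) :
    h b - h a = φ a b := by
  have hpR := hα.2.1 t ht hpt
  obtain ⟨ha, hb⟩ := isCornerOf_of_mem_edgeSquares hab hp
  refine hh.2 a b hab ⟨p, hpR, ha⟩ ⟨p, hpR, hb⟩ fun hc => hqt ?_
  obtain ⟨t', ht', hall⟩ := hc.exists_tile
  rw [hα.eq_of_mem ht ht' hpt (hall p hp)]
  exact hall q hq

end HeightFunction

theorem common_height_components_admissible_general
    {G : Type*} [AddCommGroup G]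
    (T : Set (Finset Square))
    (φ : LVert → LVert → G)
    (hanti : ∀ a b : LVert, φ a b = - φ b a)
    (R : Finset Square)
    (v₀ : LVert)
    (α β : Finset (Finset Square))
    (hα : IsTilingBy T R α) (hβ : IsTilingBy T R β)
    (Eα Eβ : Finset Square → Square → Square → Prop)
    (h : LVert → G)
    (hhα : IsHeightFunction φ R α Eα v₀ h)
    (hhβ : IsHeightFunction φ R β Eβ v₀ h)
    (t₁ : Finset Square) (ht₁ : t₁ ∈ α)
    (t₂ : Finset Square) (ht₂ : t₂ ∈ β)
    (u : Finset Square)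
    (husub : u ⊆ t₁ ∩ t₂)
    (humax : ∀ s ∈ t₁ ∩ t₂, s ∉ u → ¬ ∃ s' ∈ u, SqAdj s s') :
    ∑ s ∈ u, phiSq φ s = 0 := by
  have hbd : ∀ a b, BoundaryEdgeOf u a b → h b - h a = φ a b := by
    rintro a b ⟨hab, ⟨p, hp, hpu⟩, ⟨q, hq, hqu⟩⟩
    have hpq : SqAdj q p := sqAdj_of_mem_edgeSquares hq hp (ne_of_mem_of_not_mem hpu hqu).symm
    obtain ⟨hp₁, hp₂⟩ := Finset.mem_inter.1 (husub hpu)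
    by_cases hq₁ : q ∈ t₁
    · have hq₂ : q ∉ t₂ := fun hq₂ => humax q (Finset.mem_inter.2 ⟨hq₁, hq₂⟩) hqu ⟨p, hpu, hpq⟩
      exact hhβ.sub_eq_of_separates hβ ht₂ hab hp hq hp₂ hq₂
    · exact hhα.sub_eq_of_separates hα ht₁ hab hp hq hp₁ hq₁
  calc ∑ s ∈ u, phiSq φ s = ∑ s ∈ u, phiSq (fun a b => φ a b - (h b - h a)) s := by
        simp only [phiSq_sub_coboundary]
    _ = 0 := sum_phiSq_eq_zero_of_boundaryEdgeOf _ (fun a b => by rw [hanti a b]; abel) u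
        fun a b hab => sub_eq_zero.2 (hbd a b hab).symm

/-- Let `α` and `β` be two tilings of a simply connected
region `R` by tiles of `T` having the same height function `h`.  Then for
every tile `t₁` of `α` and every tile `t₂` of `β`, each connected component
`u` of `t₁ ∩ t₂` satisfies `φ(u) = 0`. -/
theorem common_height_components_admissible
    {G : Type*} [AddCommGroup G]
    (T : Set (Finset Square))
    (hT : ∀ t ∈ T, t.Nonempty ∧ ConnOn ↑t ∧ SimplyConnectedSq ↑t)
    (φ : LVert → LVert → G)
    (hanti : ∀ a b : LVert, φ a b = - φ b a)
    (hrel : ∀ t ∈ T, ∑ s ∈ t, phiSq φ s = 0)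
    (R : Finset Square) (hreg : IsRegion R) (hsc : SimplyConnectedSq ↑R)
    (v₀ : LVert) (hv₀ : BoundaryVertexR R v₀)
    (α β : Finset (Finset Square))
    (hα : IsTilingBy T R α) (hβ : IsTilingBy T R β)
    (Eα Eβ : Finset Square → Square → Square → Prop)
    (hEα : ∀ t ∈ α, IsSpanningTree t (Eα t))
    (hEβ : ∀ t ∈ β, IsSpanningTree t (Eβ t))
    (h : LVert → G)
    (hhα : IsHeightFunction φ R α Eα v₀ h)
    (hhβ : IsHeightFunction φ R β Eβ v₀ h)
    (t₁ : Finset Square) (ht₁ : t₁ ∈ α)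
    (t₂ : Finset Square) (ht₂ : t₂ ∈ β)
    (u : Finset Square) (hu0 : u.Nonempty)
    (husub : u ⊆ t₁ ∩ t₂) (huconn : ConnOn ↑u)
    (humax : ∀ s ∈ t₁ ∩ t₂, s ∉ u → ¬ ∃ s' ∈ u, SqAdj s s') :
    ∑ s ∈ u, phiSq φ s = 0 :=
  common_height_components_admissible_general T φ hanti R v₀ α β hα hβ Eα Eβ h hhα hhβ t₁ ht₁ t₂ ht₂
    u husub humax
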